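/- Let k ≤ l be coprime positive integers, let r be an integer with 1 ≤ r ≤ k, and let a be a real number with l/(l+r) < a ≤ l/(l+r−1). Then the point (a, a·k/l) ∈ Ω is T-periodic with minimal period P(a, a·k/l) = N(l + r − 1). -/

import Mathlib

noncomputable section

/-- The Farey triangle `Ω = {(a,b) : 0 < a ≤ 1, 0 < b ≤ 1, a + b > 1}`. -/
def FareyTriangle : Set (ℝ × ℝ) :=
  {p | 0 < p.1 ∧ p.1 ≤ 1 ∧ 0 < p.2 ∧ p.2 ≤ 1 ∧ 1 < p.1 + p.2}

/-- The BCZ map `T(a,b) = (b, -a + ⌊(1+a)/b⌋ b)`. -/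
def bcz (p : ℝ × ℝ) : ℝ × ℝ :=
  (p.2, -p.1 + (⌊(1 + p.1) / p.2⌋ : ℝ) * p.2)

/-- `N(Q) = ∑_{q ≤ Q} φ(q)`, the cardinality of the Farey sequence `F(Q)`. -/
def NFarey (Q : ℕ) : ℕ := ∑ q ∈ Finset.Icc 1 Q, Nat.totient q


/-! Put `c = a / l` and `Q = l + r - 1`, so that `⌊1 / c⌋ = Q`. On the points `c • (u, v)` with
`u, v ≤ Q < u + v` the map `T` acts by `(u, v) ↦ (v, ⌊(Q + u) / v⌋ v - u)`, which is the classical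
recursion for the denominators of consecutive fractions of the Farey sequence `F(Q)`. So sending
a fraction to `c •` (its denominator, the denominator of its successor) conjugates the cyclic
successor map of `F(Q)`, a single cycle of length `N(Q)`, to `T`, and `(a, a k / l) = c • (l, k)`
is the image of the fraction `p / l` with `k p ≡ -1 (mod l)`. -/

open Function Finset

theorem Function.minimalPeriod_eq_of_rel {α β : Type*} {f : α → α} {g : β → β}
    (R : α → β → Prop) (hstep : ∀ a b, R a b → R (f a) (g b)) {x : α} {y : β} (hxy : R x y)
    (hleft : ∀ a, R a y → a = x) (hright : ∀ b, R x b → b = y) :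
    minimalPeriod f x = minimalPeriod g y := by
  have hiter (n : ℕ) : R (f^[n] x) (g^[n] y) := by
    induction n with
    | zero => exact hxy
    | succ n ih => simpa only [iterate_succ_apply'] using hstep _ _ ih
  refine minimalPeriod_eq_minimalPeriod_iff.mpr fun n => ⟨fun h => ?_, fun h => ?_⟩
  · exact hright _ (h.eq ▸ hiter n)
  · exact hleft _ (h.eq ▸ hiter n)

namespace Finset

variable {α : Type*} [LinearOrder α]

def cyclicSucc (s : Finset α) (x : α) : α :=
  if h : (s.filter (x < ·)).Nonempty then (s.filter (x < ·)).min' h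
  else if hs : s.Nonempty then s.min' hs else x

variable {s : Finset α} {x y : α}

theorem cyclicSucc_eq_of_lt (hy : y ∈ s) (hxy : x < y) (hmin : ∀ z ∈ s, x < z → y ≤ z) :
    s.cyclicSucc x = y := by
  have hy' : y ∈ s.filter (x < ·) := mem_filter.mpr ⟨hy, hxy⟩
  rw [cyclicSucc, dif_pos ⟨y, hy'⟩]
  refine le_antisymm (min'_le _ _ hy') (le_min' _ _ _ fun z hz => ?_)
  exact hmin z (mem_filter.mp hz).1 (mem_filter.mp hz).2

theorem cyclicSucc_eq_min' (hs : s.Nonempty) (hmax : ∀ z ∈ s, z ≤ x) :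
    s.cyclicSucc x = s.min' hs := by
  have hempty : ¬(s.filter (x < ·)).Nonempty := fun ⟨z, hz⟩ =>
    (mem_filter.mp hz).2.not_ge (hmax z (mem_filter.mp hz).1)
  rw [cyclicSucc, dif_neg hempty, dif_pos hs]

theorem cyclicSucc_orderEmbOfFin {n : ℕ} (h : s.card = n + 1) (i : Fin (n + 1)) :
    s.cyclicSucc (s.orderEmbOfFin h i) = s.orderEmbOfFin h (i + 1) := by
  set e := s.orderEmbOfFin h
  have he : ∀ z ∈ s, ∃ j, e j = z := fun z hz => by
    rwa [← Set.mem_range, range_orderEmbOfFin]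
  rcases (Fin.le_last i).lt_or_eq with hi | rfl
  · refine cyclicSucc_eq_of_lt (s.orderEmbOfFin_mem h _)
      (e.strictMono (Fin.lt_add_one_iff.mpr hi)) ?_
    rintro _ hz hiz
    obtain ⟨j, rfl⟩ := he _ hz
    exact e.monotone (Fin.add_one_le_of_lt (e.lt_iff_lt.mp hiz))
  · rw [Fin.last_add_one, cyclicSucc_eq_min' ⟨_, s.orderEmbOfFin_mem h 0⟩]
    · exact (orderEmbOfFin_zero h n.succ_pos).symm
    · intro z hz
      obtain ⟨j, rfl⟩ := he _ hz
      exact e.monotone (Fin.le_last j)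

open Fin.NatCast in
theorem minimalPeriod_cyclicSucc (hx : x ∈ s) : minimalPeriod s.cyclicSucc x = s.card := by
  obtain ⟨n, h⟩ : ∃ n, s.card = n + 1 := Nat.exists_eq_add_one.mpr (card_pos.mpr ⟨x, hx⟩)
  obtain ⟨i, rfl⟩ : ∃ i, s.orderEmbOfFin h i = x := by
    rwa [← Set.mem_range, range_orderEmbOfFin]
  have hiter (j : ℕ) : s.cyclicSucc^[j] (s.orderEmbOfFin h i) = s.orderEmbOfFin h (i + j) := by
    induction j with
    | zero => simp
    | succ j ih =>
      rw [iterate_succ_apply', ih, cyclicSucc_orderEmbOfFin, Nat.cast_succ, add_assoc]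
  rw [h]
  refine (Nat.dvd_right_iff_eq.mp fun j => ?_).symm
  rw [← isPeriodicPt_iff_minimalPeriod_dvd, IsPeriodicPt, IsFixedPt, hiter,
    (s.orderEmbOfFin h).injective.eq_iff, add_eq_left, Fin.natCast_eq_zero]

end Finset

theorem Rat.num_den_div_of_isCoprime {p : ℤ} {q : ℕ} (hq : 0 < q) (h : IsCoprime p q) :
    ((p : ℚ) / q).num = p ∧ ((p : ℚ) / q).den = q := by
  have hq' : (0 : ℤ) < q := by exact_mod_cast hq
  have h' : Nat.Coprime p.natAbs (q : ℤ).natAbs := Int.isCoprime_iff_gcd_eq_one.mp h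
  have hnum := Rat.num_div_eq_of_coprime hq' h'
  have hden := Rat.den_div_eq_of_coprime hq' h'
  rw [Int.cast_natCast] at hnum hden
  exact ⟨hnum, by exact_mod_cast hden⟩

theorem Rat.add_le_den_of_lt_of_lt {p p' : ℤ} {u v : ℕ} (hu : 0 < u) (hv : 0 < v)
    (hdet : (u : ℤ) * p' = v * p + 1) {z : ℚ} (hxz : (p : ℚ) / u < z) (hzy : z < (p' : ℚ) / v) :
    u + v ≤ z.den := by
  have hz : (0 : ℚ) < z.den := by exact_mod_cast z.pos
  rw [← Rat.num_div_den z] at hxz hzy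
  rw [div_lt_div_iff₀ (by exact_mod_cast hu) hz] at hxz
  rw [div_lt_div_iff₀ hz (by exact_mod_cast hv)] at hzy
  have h₁ : p * z.den < z.num * u := by exact_mod_cast hxz
  have h₂ : z.num * v < p' * z.den := by exact_mod_cast hzy
  have hsplit : (z.den : ℤ) = u * (p' * z.den - z.num * v) + v * (z.num * u - p * z.den) := by
    linear_combination (-(z.den : ℤ)) * hdet
  have : (u : ℤ) + v ≤ z.den := by nlinarith
  exact_mod_cast this

def fareyBlock (q : ℕ) : Finset ℚ :=
  ((range q).filter q.Coprime).image fun p : ℕ => (p : ℚ) / q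

theorem mem_fareyBlock {q : ℕ} {x : ℚ} : x ∈ fareyBlock q ↔ 0 ≤ x ∧ x < 1 ∧ x.den = q := by
  simp only [fareyBlock, mem_image, mem_filter, mem_range]
  constructor
  · rintro ⟨p, ⟨hpq, hcop⟩, rfl⟩
    obtain ⟨hnum, hden⟩ := Rat.num_den_div_of_isCoprime (p := p) (by omega)
      (Nat.isCoprime_iff_coprime.mpr hcop.symm)
    rw [Int.cast_natCast] at hnum hden
    refine ⟨by positivity, Rat.num_lt_denom_iff.mp ?_, hden⟩
    rw [hnum, hden]
    exact_mod_cast hpq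
  · rintro ⟨h0, h1, rfl⟩
    have hnum := Rat.num_nonneg.mpr h0
    refine ⟨x.num.toNat, ⟨?_, ?_⟩, ?_⟩
    · have := Rat.num_lt_denom_iff.mpr h1
      omega
    · rw [show x.num.toNat = x.num.natAbs by omega]
      exact x.reduced.symm
    · rw [← Int.cast_natCast, Int.toNat_of_nonneg hnum, Rat.num_div_den]

theorem card_fareyBlock (q : ℕ) : (fareyBlock q).card = q.totient := by
  rw [fareyBlock, card_image_of_injOn, Nat.totient_eq_card_coprime]
  intro p₁ hp₁ p₂ _ h
  have hq : (q : ℚ) ≠ 0 := by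
    have := mem_range.mp (mem_filter.mp hp₁).1
    exact_mod_cast (show q ≠ 0 by omega)
  exact_mod_cast (div_left_inj' hq).mp h

def fareySet (Q : ℕ) : Finset ℚ :=
  (Icc 1 Q).biUnion fareyBlock

theorem mem_fareySet {Q : ℕ} {x : ℚ} : x ∈ fareySet Q ↔ 0 ≤ x ∧ x < 1 ∧ x.den ≤ Q := by
  simp only [fareySet, mem_biUnion, mem_Icc, mem_fareyBlock]
  constructor
  · rintro ⟨q, ⟨-, hqQ⟩, h0, h1, rfl⟩
    exact ⟨h0, h1, hqQ⟩
  · rintro ⟨h0, h1, hQ⟩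
    exact ⟨x.den, ⟨x.pos, hQ⟩, h0, h1, rfl⟩

theorem card_fareySet (Q : ℕ) : (fareySet Q).card = NFarey Q := by
  rw [fareySet, card_biUnion]
  · exact sum_congr rfl fun q _ => card_fareyBlock q
  · intro q₁ _ q₂ _ hne
    refine disjoint_left.mpr fun x hx₁ hx₂ => hne ?_
    exact (mem_fareyBlock.mp hx₁).2.2.symm.trans (mem_fareyBlock.mp hx₂).2.2

theorem zero_mem_fareySet {Q : ℕ} (hQ : 0 < Q) : (0 : ℚ) ∈ fareySet Q :=
  mem_fareySet.mpr ⟨le_rfl, zero_lt_one, hQ⟩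

theorem min'_fareySet {Q : ℕ} (h : (fareySet Q).Nonempty) : (fareySet Q).min' h = 0 := by
  obtain ⟨z, hz⟩ := h
  have hQ : 0 < Q := z.pos.trans_le (mem_fareySet.mp hz).2.2
  exact le_antisymm (min'_le _ _ (zero_mem_fareySet hQ))
    (le_min' _ _ _ fun y hy => (mem_fareySet.mp hy).1)

def fareyNextDen (Q u v : ℕ) : ℕ := (Q + u) / v * v - u

theorem fareyNextDen_bounds {Q u v : ℕ} (hv : 0 < v) (hvQ : v ≤ Q) :
    0 < fareyNextDen Q u v ∧ fareyNextDen Q u v ≤ Q ∧ Q < v + fareyNextDen Q u v := by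
  have h₁ := Nat.div_mul_le_self (Q + u) v
  have h₂ := Nat.lt_div_mul_add (a := Q + u) hv
  unfold fareyNextDen
  omega

theorem natCast_fareyNextDen {Q u v : ℕ} (hv : 0 < v) (hvQ : v ≤ Q) :
    (fareyNextDen Q u v : ℤ) = ((Q : ℤ) + u) / v * v - u := by
  have h := Nat.lt_div_mul_add (a := Q + u) hv
  rw [fareyNextDen, Nat.cast_sub (by omega)]
  push_cast
  rfl

theorem le_of_mem_fareySet_of_lt {Q u v : ℕ} {p p' : ℤ} (hu : 0 < u) (hv : 0 < v)
    (huv : Q < u + v) (hdet : (u : ℤ) * p' = v * p + 1) {z : ℚ} (hz : z ∈ fareySet Q)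
    (hxz : (p : ℚ) / u < z) : (p' : ℚ) / v ≤ z := by
  by_contra! hzy
  have := Rat.add_le_den_of_lt_of_lt hu hv hdet hxz hzy
  linarith [(mem_fareySet.mp hz).2.2]

/-- `u` and `v` are the denominators of `x` and of its successor in `F(Q)`, read cyclically: after
`(Q - 1) / Q` comes `0 / 1`, which stands in for `1 / 1`. By the neighbour criterion for Farey
fractions, the successor is the `p' / v` with `u p' = v x.num + 1`. -/
structure IsFareyPair (Q : ℕ) (x : ℚ) (u v : ℕ) : Prop where
  mem : x ∈ fareySet Q
  den_eq : x.den = u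
  pos : 0 < v
  le : v ≤ Q
  lt_add : Q < u + v
  dvd : (u : ℤ) ∣ v * x.num + 1

namespace IsFareyPair

variable {Q u v : ℕ} {x : ℚ}

theorem num_nonneg_and_num_lt (h : IsFareyPair Q x u v) : 0 ≤ x.num ∧ x.num < u := by
  obtain ⟨h0, h1, -⟩ := mem_fareySet.mp h.mem
  exact ⟨Rat.num_nonneg.mpr h0, h.den_eq ▸ Rat.num_lt_denom_iff.mpr h1⟩

theorem cyclicSucc (h : IsFareyPair Q x u v) :
    IsFareyPair Q ((fareySet Q).cyclicSucc x) v (fareyNextDen Q u v) := by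
  obtain ⟨hp0, hpu⟩ := h.num_nonneg_and_num_lt
  obtain ⟨hx, rfl, hv, hvQ, huv, p', hp'⟩ := h
  obtain ⟨hw, hwQ, hvw⟩ := fareyNextDen_bounds (u := x.den) hv hvQ
  have hdet : (x.den : ℤ) * p' = v * x.num + 1 := hp'.symm
  have hu : (0 : ℚ) < x.den := by exact_mod_cast x.pos
  have hv' : (0 : ℚ) < v := by exact_mod_cast hv
  have hcop : IsCoprime p' v := ⟨x.den, -x.num, by linear_combination hdet⟩
  obtain ⟨hynum, hyden⟩ := Rat.num_den_div_of_isCoprime hv hcop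
  have hxy : x < (p' : ℚ) / v := by
    rw [← Rat.num_div_den x, div_lt_div_iff₀ hu hv']
    exact_mod_cast (by linarith : x.num * v < p' * x.den)
  have hgap : ∀ z ∈ fareySet Q, x < z → (p' : ℚ) / v ≤ z := fun z hz hxz =>
    le_of_mem_fareySet_of_lt x.pos hv huv hdet hz (by rwa [Rat.num_div_den])
  have hp'v : p' ≤ v := by
    have : (x.den : ℤ) * p' ≤ x.den * v := by nlinarith
    exact le_of_mul_le_mul_left this (by exact_mod_cast x.pos)
  rcases hp'v.lt_or_eq with hlt | rfl
  · have hyF : (p' : ℚ) / v ∈ fareySet Q := by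
      refine mem_fareySet.mpr ⟨?_, ?_, by rw [hyden]; exact hvQ⟩
      · exact div_nonneg (by exact_mod_cast (by nlinarith : (0 : ℤ) ≤ p')) hv'.le
      · exact Rat.num_lt_denom_iff.mp (by rw [hynum, hyden]; exact hlt)
    rw [Finset.cyclicSucc_eq_of_lt hyF hxy hgap]
    refine ⟨hyF, hyden, hw, hwQ, hvw, (Q + x.den) / v * p' - x.num, ?_⟩
    rw [hynum, natCast_fareyNextDen hv hvQ]
    linear_combination -hdet
  · have hv1 : v = 1 := by
      have : (v : ℤ) * (x.den - x.num) = 1 := by linear_combination hdet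
      exact_mod_cast Int.eq_one_of_mul_eq_one_right (by positivity) this
    subst hv1
    have hmax : ∀ z ∈ fareySet Q, z ≤ x := fun z hz => by
      by_contra! hxz
      have := hgap z hz hxz
      norm_num at this
      linarith [(mem_fareySet.mp hz).2.1]
    have hne : (fareySet Q).Nonempty := ⟨x, hx⟩
    rw [Finset.cyclicSucc_eq_min' hne hmax, min'_fareySet]
    exact ⟨zero_mem_fareySet hvQ, Rat.den_zero, hw, hwQ, hvw, one_dvd _⟩

theorem left_unique {y : ℚ} (hx : IsFareyPair Q x u v) (hy : IsFareyPair Q y u v) : x = y := by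
  obtain ⟨hx0, hxu⟩ := hx.num_nonneg_and_num_lt
  obtain ⟨hy0, hyu⟩ := hy.num_nonneg_and_num_lt
  obtain ⟨-, hxd, -, -, -, c, hc⟩ := hx
  obtain ⟨-, hyd, -, -, -, d, hd⟩ := hy
  have hcop : IsCoprime (u : ℤ) v := ⟨c, -x.num, by linear_combination -hc⟩
  have hdvd : (u : ℤ) ∣ x.num - y.num :=
    hcop.dvd_of_dvd_mul_left ⟨c - d, by linear_combination hc - hd⟩
  have := Int.eq_zero_of_abs_lt_dvd hdvd (by rw [abs_lt]; omega)
  exact Rat.ext (by omega) (hxd.trans hyd.symm)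

theorem right_unique {u' v' : ℕ} (h : IsFareyPair Q x u v) (h' : IsFareyPair Q x u' v') :
    u = u' ∧ v = v' := by
  obtain ⟨hx0, hxu⟩ := h.num_nonneg_and_num_lt
  obtain ⟨-, rfl, -, hvQ, huv, c, hc⟩ := h
  obtain ⟨-, rfl, -, hvQ', huv', d, hd⟩ := h'
  have hcop : IsCoprime (x.den : ℤ) x.num := ⟨c, -v, by linear_combination -hc⟩
  have hdvd : (x.den : ℤ) ∣ v - v' :=
    hcop.dvd_of_dvd_mul_right ⟨c - d, by linear_combination hc - hd⟩
  have := Int.eq_zero_of_abs_lt_dvd hdvd (by rw [abs_lt]; omega)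
  exact ⟨rfl, by omega⟩

end IsFareyPair

theorem exists_isFareyPair {Q u v : ℕ} (hcop : Nat.Coprime v u) (hu : 0 < u) (huQ : u ≤ Q)
    (hv : 0 < v) (hvQ : v ≤ Q) (huv : Q < u + v) : ∃ x, IsFareyPair Q x u v := by
  obtain ⟨s, t, hst⟩ : IsCoprime (v : ℤ) u := Nat.isCoprime_iff_coprime.mpr hcop
  have hu' : (0 : ℤ) < u := by exact_mod_cast hu
  set p := -s % u with hp
  have hp0 : 0 ≤ p := Int.emod_nonneg _ hu'.ne'
  have hpu : p < u := Int.emod_lt_of_pos _ hu'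
  obtain ⟨c, hc⟩ : (u : ℤ) ∣ v * p + 1 :=
    ⟨t - v * (-s / u), by rw [hp, Int.emod_def]; linear_combination -hst⟩
  have hcop' : IsCoprime p u := ⟨-v, c, by linear_combination -hc⟩
  obtain ⟨hnum, hden⟩ := Rat.num_den_div_of_isCoprime hu hcop'
  refine ⟨p / u, mem_fareySet.mpr ⟨?_, ?_, by rw [hden]; exact huQ⟩, hden, hv, hvQ, huv,
    by rw [hnum]; exact ⟨c, hc⟩⟩
  · exact div_nonneg (by exact_mod_cast hp0) (Nat.cast_nonneg u)
  · exact Rat.num_lt_denom_iff.mp (by rw [hnum, hden]; exact hpu)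

theorem bcz_mul_natCast {c : ℝ} (hc : c ≠ 0) (u v : ℕ) :
    bcz (c * u, c * v) = (c * v, c * (((⌊c⁻¹⌋ + u) / v * v - u : ℤ) : ℝ)) := by
  have hfloor : ⌊(1 + c * u) / (c * v)⌋ = (⌊c⁻¹⌋ + u) / v := by
    rw [← div_div, add_div, mul_div_cancel_left₀ _ hc, one_div, Int.floor_div_natCast,
      Int.floor_add_natCast]
  simp only [bcz, hfloor]
  push_cast
  ring_nf

theorem mul_natCast_mem_fareyTriangle {Q u v : ℕ} {c : ℝ} (hc : 0 < c) (hQ : ⌊c⁻¹⌋ = Q)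
    (hu : 0 < u) (huQ : u ≤ Q) (hv : 0 < v) (hvQ : v ≤ Q) (huv : Q < u + v) :
    (c * u, c * v) ∈ FareyTriangle := by
  have h₁ : (Q : ℝ) ≤ c⁻¹ := by simpa [hQ] using Int.floor_le c⁻¹
  have h₂ : c⁻¹ < Q + 1 := by simpa [hQ] using Int.lt_floor_add_one c⁻¹
  have hcQ : c * Q ≤ 1 := by simpa [hc.ne'] using mul_le_mul_of_nonneg_left h₁ hc.le
  have hcQ' : 1 < c * (Q + 1) := by simpa [hc.ne'] using mul_lt_mul_of_pos_left h₂ hc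
  have huQ' : (u : ℝ) ≤ Q := by exact_mod_cast huQ
  have hvQ' : (v : ℝ) ≤ Q := by exact_mod_cast hvQ
  have huv' : (Q : ℝ) + 1 ≤ u + v := by exact_mod_cast huv
  refine ⟨by positivity, by nlinarith, by positivity, by nlinarith, by nlinarith⟩

theorem minimalPeriod_bcz_mul_natCast {Q u v : ℕ} {c : ℝ} (hc : c ≠ 0) (hQ : ⌊c⁻¹⌋ = Q)
    {x : ℚ} (hx : IsFareyPair Q x u v) : minimalPeriod bcz (c * u, c * v) = NFarey Q := by
  rw [← card_fareySet, ← Finset.minimalPeriod_cyclicSucc hx.mem]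
  refine (minimalPeriod_eq_of_rel (fun x p => ∃ u v, IsFareyPair Q x u v ∧ p = (c * u, c * v))
    ?_ ⟨u, v, hx, rfl⟩ ?_ ?_).symm
  · rintro x _ ⟨u, v, h, rfl⟩
    refine ⟨v, fareyNextDen Q u v, h.cyclicSucc, ?_⟩
    rw [bcz_mul_natCast hc, hQ, ← Int.cast_natCast (fareyNextDen Q u v),
      natCast_fareyNextDen h.pos h.le]
  · rintro y ⟨u', v', h', he⟩
    obtain ⟨rfl, rfl⟩ : u = u' ∧ v = v' := by simpa [hc] using he
    exact h'.left_unique hx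
  · rintro p ⟨u', v', h', rfl⟩
    obtain ⟨rfl, rfl⟩ := hx.right_unique h'
    rfl

theorem bcz_period_of_rational_slope_segment (k l r : ℕ) (hk : 0 < k) (hkl : k ≤ l)
    (hcop : Nat.Coprime k l) (hr1 : 1 ≤ r) (hrk : r ≤ k) (a : ℝ)
    (ha1 : (l : ℝ) / ((l : ℝ) + r) < a) (ha2 : a ≤ (l : ℝ) / ((l : ℝ) + r - 1)) :
    (a, a * k / l) ∈ FareyTriangle ∧
    Function.IsPeriodicPt bcz (NFarey (l + r - 1)) (a, a * k / l) ∧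
    Function.minimalPeriod bcz (a, a * k / l) = NFarey (l + r - 1) := by
  set Q := l + r - 1 with hQ
  have hl : 0 < l := hk.trans_le hkl
  have hQR : (Q : ℝ) = l + r - 1 := by rw [hQ, Nat.cast_sub (by omega)]; push_cast; ring
  have hr : (1 : ℝ) ≤ r := by exact_mod_cast hr1
  have hlR : (0 : ℝ) < l := by exact_mod_cast hl
  have ha0 : 0 < a := lt_of_le_of_lt (by positivity) ha1
  have hc : 0 < a / l := by positivity
  have hfloor : ⌊(a / l)⁻¹⌋ = Q := by
    rw [div_lt_iff₀ (by positivity)] at ha1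
    rw [le_div_iff₀ (by linarith)] at ha2
    rw [inv_div, Int.floor_eq_iff, le_div_iff₀ ha0, div_lt_iff₀ ha0]
    push_cast
    constructor <;> nlinarith
  have hpt : (a, a * k / l) = (a / l * l, a / l * k) := by
    have : (l : ℝ) ≠ 0 := by positivity
    ext <;> field_simp
  obtain ⟨x, hx⟩ := exists_isFareyPair (Q := Q) hcop hl (by omega) hk (by omega) (by omega)
  have hmin := minimalPeriod_bcz_mul_natCast hc.ne' hfloor hx
  rw [hpt]
  refine ⟨mul_natCast_mem_fareyTriangle hc hfloor hl (by omega) hk (by omega) (by omega), ?_, hmin⟩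
  rw [← hmin]
  exact isPeriodicPt_minimalPeriod _ _
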